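/- Let (AS, K) be the abstract-logic (AL) argumentation theory based on an adjunctive abstract logic (L', Cn) and a theory (Σ, ≤'). Then A is a c-consistent premise-minimal argument on the basis of (AS, K) if and only if (Prem(A), Conc(A)) is an AL-argument on the basis of (Σ, ≤'). -/
import Mathlib

namespace ASPIC

/-- An inference rule over the language `L`: a list of antecedents and a consequent. -/
structure InfRule (L : Type) where
  ants : List L
  cons : L

/-- An ASPIC+ argumentation system: a contrariness function, disjoint sets of strict
and defeasible inference rules, and a naming function for (defeasible) rules;
every formula has at least one contradictory. -/
structure ArgSystem (L : Type) where
  contr : L → Set L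
  Rs : Set (InfRule L)
  Rd : Set (InfRule L)
  nm : InfRule L → L
  hdisj : Rs ∩ Rd = ∅
  hcontrad : ∀ φ : L, ∃ ψ : L, ψ ∈ contr φ ∧ φ ∈ contr ψ

/-- A knowledge base: disjoint axioms `Kn` and ordinary premises `Kp`. -/
structure KB (L : Type) where
  Kn : Set L
  Kp : Set L
  hdisj : Kn ∩ Kp = ∅

/-- Argument trees: a premise, or the application of an inference rule to a list of
sub-arguments.  (All such trees are finite.) -/
inductive Arg (L : Type) : Type where
  | prem : L → Arg L
  | app : List (Arg L) → InfRule L → Arg L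

namespace Arg

variable {L : Type}

/-- The conclusion of an argument. -/
def conc : Arg L → L
  | prem φ => φ
  | app _ r => r.cons

/-- The top rule of an argument (none for premises). -/
def topRule : Arg L → Option (InfRule L)
  | prem _ => none
  | app _ r => some r

mutual
  /-- The premises of an argument. -/
  def premises : Arg L → Set L
    | prem φ => {φ}
    | app l _ => premisesL l
  def premisesL : List (Arg L) → Set L
    | [] => ∅
    | a :: as => premises a ∪ premisesL as
end

mutual
  /-- The sub-arguments of an argument (including itself). -/
  def subs : Arg L → Set (Arg L)
    | prem φ => {Arg.prem φ}
    | app l r => subsL l ∪ {Arg.app l r}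
  def subsL : List (Arg L) → Set (Arg L)
    | [] => ∅
    | a :: as => subs a ∪ subsL as
end

mutual
  /-- The rules occurring in an argument. -/
  def rules : Arg L → Set (InfRule L)
    | prem _ => ∅
    | app l r => rulesL l ∪ {r}
  def rulesL : List (Arg L) → Set (InfRule L)
    | [] => ∅
    | a :: as => rules a ∪ rulesL as
end

mutual
  /-- The last defeasible rules of an argument (relative to the set `Rd` of
  defeasible rules). -/
  def lastDefRules (Rd : Set (InfRule L)) : Arg L → Set (InfRule L)
    | prem _ => ∅
    | app l r =>
        let rest := lastDefRulesL Rd l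
        {x | (r ∈ Rd ∧ x = r) ∨ (r ∉ Rd ∧ x ∈ rest)}
  def lastDefRulesL (Rd : Set (InfRule L)) : List (Arg L) → Set (InfRule L)
    | [] => ∅
    | a :: as => lastDefRules Rd a ∪ lastDefRulesL Rd as
end

end Arg

variable {L : Type}

/-- Well-formed arguments on the basis of an argumentation theory `(AS, K)`. -/
inductive IsArg (AS : ArgSystem L) (K : KB L) : Arg L → Prop where
  | prem {φ : L} : φ ∈ K.Kn ∪ K.Kp → IsArg AS K (.prem φ)
  | app {l : List (Arg L)} {r : InfRule L} :
      (∀ a ∈ l, IsArg AS K a) →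
      r ∈ AS.Rs ∪ AS.Rd →
      l.map Arg.conc = r.ants →
      IsArg AS K (.app l r)

/-- The defeasible rules of an argument. -/
def defRules (AS : ArgSystem L) (A : Arg L) : Set (InfRule L) := A.rules ∩ AS.Rd
/-- The strict rules of an argument. -/
def stRules (AS : ArgSystem L) (A : Arg L) : Set (InfRule L) := A.rules ∩ AS.Rs
/-- The ordinary premises of an argument. -/
def premP (K : KB L) (A : Arg L) : Set L := A.premises ∩ K.Kp
/-- The axiom premises of an argument. -/
def premN (K : KB L) (A : Arg L) : Set L := A.premises ∩ K.Kn
/-- An argument is strict if it uses no defeasible rules. -/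
def strictArg (AS : ArgSystem L) (A : Arg L) : Prop := defRules AS A = ∅
/-- An argument is firm if all its premises are axioms. -/
def firmArg (K : KB L) (A : Arg L) : Prop := A.premises ⊆ K.Kn

/-- `φ` is a contrary of `ψ`. -/
def contrary (AS : ArgSystem L) (φ ψ : L) : Prop := φ ∈ AS.contr ψ ∧ ψ ∉ AS.contr φ
/-- `φ` and `ψ` are contradictories of each other. -/
def contrad (AS : ArgSystem L) (φ ψ : L) : Prop := φ ∈ AS.contr ψ ∧ ψ ∈ AS.contr φ

/-- Strict derivability: `SDer AS S φ` iff there is a strict argument for `φ` all of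
whose premises lie in `S` (`S ⊢ φ`). -/
inductive SDer (AS : ArgSystem L) (S : Set L) : L → Prop where
  | prem {φ : L} : φ ∈ S → SDer AS S φ
  | rule {r : InfRule L} : r ∈ AS.Rs → (∀ ψ ∈ r.ants, SDer AS S ψ) → SDer AS S r.cons

/-- `S` is c-consistent: for no pair of contradictories are both strictly derivable. -/
def CCons (AS : ArgSystem L) (S : Set L) : Prop :=
  ∀ φ ψ : L, contrad AS φ ψ → ¬ (SDer AS S φ ∧ SDer AS S ψ)

/-- `S` is minimally c-inconsistent. -/
def MinCIncons (AS : ArgSystem L) (S : Set L) : Prop :=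
  ¬ CCons AS S ∧ ∀ S' ⊂ S, CCons AS S'

/-- Closure under strict rules. -/
inductive ClRs (AS : ArgSystem L) (S : Set L) : L → Prop where
  | base {φ : L} : φ ∈ S → ClRs AS S φ
  | step {r : InfRule L} : r ∈ AS.Rs → (∀ ψ ∈ r.ants, ClRs AS S ψ) → ClRs AS S r.cons

/-- Direct consistency of a set of formulas. -/
def Consistent (AS : ArgSystem L) (S : Set L) : Prop :=
  ¬ ∃ φ ψ : L, φ ∈ S ∧ ψ ∈ S ∧ ψ ∈ AS.contr φ

/-- The argumentation theory is closed under contraposition. -/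
def ContraClosed (AS : ArgSystem L) : Prop :=
  ∀ (S : Set L) (s : L), s ∈ S → ∀ φ : L, SDer AS S φ →
    ∀ nφ : L, contrad AS φ nφ →
      ∃ ns : L, contrad AS s ns ∧ SDer AS ((S \ {s}) ∪ {nφ}) ns

/-- The argumentation theory is closed under transposition. -/
def TransClosed (AS : ArgSystem L) : Prop :=
  ∀ r ∈ AS.Rs, ∀ i : Fin r.ants.length, ∀ nψ : L, contrad AS r.cons nψ →
    ∃ nφ : L, contrad AS (r.ants.get i) nφ ∧
      ({ ants := r.ants.set i.1 nψ, cons := nφ } : InfRule L) ∈ AS.Rs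

/-- Axiom consistency: the strict closure of the axioms is consistent. -/
def AxiomConsistent (AS : ArgSystem L) (K : KB L) : Prop :=
  Consistent AS {φ | ClRs AS K.Kn φ}

/-- c-classicality. -/
def CClassical (AS : ArgSystem L) : Prop :=
  ∀ S : Set L, MinCIncons AS S → ∀ φ ∈ S,
    ∃ nφ : L, contrad AS φ nφ ∧ SDer AS (S \ {φ}) nφ

/-- Well-formedness: contraried formulas are neither axioms nor consequents of strict rules. -/
def WellFormed (AS : ArgSystem L) (K : KB L) : Prop :=
  ∀ φ ψ : L, contrary AS φ ψ → ψ ∉ K.Kn ∧ ∀ r ∈ AS.Rs, r.cons ≠ ψ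

/-- Well-definedness for SAFs. -/
def WellDefinedSAF (AS : ArgSystem L) (K : KB L) : Prop :=
  AxiomConsistent AS K ∧ WellFormed AS K ∧ (ContraClosed AS ∨ TransClosed AS)

/-- Well-definedness for c-SAFs. -/
def WellDefinedCSAF (AS : ArgSystem L) (K : KB L) : Prop :=
  WellDefinedSAF AS K ∧ CClassical AS

/-- The arguments of the SAF defined by `(AS,K)`: all (finite) arguments. -/
def ArgsSAF (AS : ArgSystem L) (K : KB L) : Set (Arg L) := {A | IsArg AS K A}

/-- The arguments of the c-SAF defined by `(AS,K)`: all (finite) c-consistent arguments. -/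
def ArgsCSAF (AS : ArgSystem L) (K : KB L) : Set (Arg L) :=
  {A | IsArg AS K A ∧ CCons AS A.premises}

/-- `A` undercuts `B` on `B'`. -/
def undercutsOn (AS : ArgSystem L) (A B B' : Arg L) : Prop :=
  B' ∈ B.subs ∧ ∃ r ∈ AS.Rd, B'.topRule = some r ∧ A.conc ∈ AS.contr (AS.nm r)

/-- `A` rebuts `B` on `B'`. -/
def rebutsOn (AS : ArgSystem L) (A B B' : Arg L) : Prop :=
  B' ∈ B.subs ∧ ∃ r ∈ AS.Rd, B'.topRule = some r ∧ A.conc ∈ AS.contr B'.conc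

/-- `A` undermines `B` on `B'`. -/
def underminesOn (AS : ArgSystem L) (K : KB L) (A B B' : Arg L) : Prop :=
  B' ∈ B.subs ∧ ∃ φ ∈ K.Kp, B' = Arg.prem φ ∧ A.conc ∈ AS.contr φ

/-- `A` attacks `B` on `B'`. -/
def attacksOn (AS : ArgSystem L) (K : KB L) (A B B' : Arg L) : Prop :=
  undercutsOn AS A B B' ∨ rebutsOn AS A B B' ∨ underminesOn AS K A B B'

/-- `A` attacks `B`. -/
def attacks (AS : ArgSystem L) (K : KB L) (A B : Arg L) : Prop :=
  ∃ B', attacksOn AS K A B B'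

/-- Preference-independent attacks: undercuts, contrary-rebuts and contrary-undermines. -/
def prefIndepOn (AS : ArgSystem L) (K : KB L) (A B B' : Arg L) : Prop :=
  undercutsOn AS A B B' ∨
  (rebutsOn AS A B B' ∧ contrary AS A.conc B'.conc) ∨
  (underminesOn AS K A B B' ∧ contrary AS A.conc B'.conc)

/-- Preference-dependent attacks. -/
def prefDepOn (AS : ArgSystem L) (K : KB L) (A B B' : Arg L) : Prop :=
  attacksOn AS K A B B' ∧ ¬ prefIndepOn AS K A B B'

/-- The strict counterpart `≺` of an ordering `⪯`. -/
def sprec (pre : Arg L → Arg L → Prop) (X Y : Arg L) : Prop := pre X Y ∧ ¬ pre Y X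

/-- `A` defeats `B`, relative to a strict preference relation `slt` (`≺`). -/
def defeats (AS : ArgSystem L) (K : KB L) (slt : Arg L → Arg L → Prop) (A B : Arg L) : Prop :=
  ∃ B', prefIndepOn AS K A B B' ∨ (prefDepOn AS K A B B' ∧ ¬ slt A B')

/-- `A` is a strict continuation of the set of arguments `Γ`. -/
def StrictCont (AS : ArgSystem L) (K : KB L) (A : Arg L) (Γ : Set (Arg L)) : Prop :=
  premP K A = (⋃ B ∈ Γ, premP K B) ∧
  defRules AS A = (⋃ B ∈ Γ, defRules AS B) ∧
  (⋃ B ∈ Γ, stRules AS B) ⊆ stRules AS A ∧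
  (⋃ B ∈ Γ, premN K B) ⊆ premN K A

/-- `B'` has a fallible top: a defeasible top rule, or an ordinary premise. -/
def fallibleTop (AS : ArgSystem L) (K : KB L) (B' : Arg L) : Prop :=
  (∃ r ∈ AS.Rd, B'.topRule = some r) ∨ (∃ φ ∈ K.Kp, B' = Arg.prem φ)

/-- `M(B)`: the maximal fallible sub-arguments of `B`. -/
def MSet (AS : ArgSystem L) (K : KB L) (B : Arg L) : Set (Arg L) :=
  {B' | B' ∈ B.subs ∧ fallibleTop AS K B' ∧
    ¬ ∃ B'', B'' ∈ B.subs ∧ B'' ≠ B ∧ B'' ≠ B' ∧ fallibleTop AS K B'' ∧ B' ∈ B''.subs}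

/-- A reasonable argument ordering. -/
def Reasonable (AS : ArgSystem L) (K : KB L) (pre : Arg L → Arg L → Prop) : Prop :=
  (∀ A B : Arg L, strictArg AS A → firmArg K A →
      (¬ firmArg K B ∨ ¬ strictArg AS B) → sprec pre B A) ∧
  (∀ A B : Arg L, strictArg AS B → firmArg K B → ¬ sprec pre B A) ∧
  (∀ A A' B : Arg L, StrictCont AS K A' {A} →
      (¬ sprec pre A B → ¬ sprec pre A' B) ∧ (¬ sprec pre B A → ¬ sprec pre B A')) ∧
  (∀ s : Finset (Arg L), s.Nonempty → ∀ f : Arg L → Arg L,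
      (∀ C ∈ s, StrictCont AS K (f C) ((↑s : Set (Arg L)) \ {C})) →
      ¬ (∀ C ∈ s, sprec pre (f C) C))

/-- Conflict-freeness of `S` with respect to a relation (attack or defeat). -/
def CFwrt (rel : Arg L → Arg L → Prop) (S : Set (Arg L)) : Prop :=
  ∀ X ∈ S, ∀ Y ∈ S, ¬ rel X Y

/-- `A` is acceptable with respect to `S` (all its defeaters in `𝒜` are defeated from `S`). -/
def Acceptable (𝒜 : Set (Arg L)) (df : Arg L → Arg L → Prop)
    (S : Set (Arg L)) (A : Arg L) : Prop :=
  ∀ B ∈ 𝒜, df B A → ∃ C ∈ S, df C B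

/-- Admissible sets, relative to a conflict-freeness notion `cf` and defeat relation `df`. -/
def Admissible (𝒜 : Set (Arg L)) (cf : Set (Arg L) → Prop)
    (df : Arg L → Arg L → Prop) (S : Set (Arg L)) : Prop :=
  S ⊆ 𝒜 ∧ cf S ∧ ∀ A ∈ S, Acceptable 𝒜 df S A

/-- Complete extensions. -/
def Complete (𝒜 : Set (Arg L)) (cf : Set (Arg L) → Prop)
    (df : Arg L → Arg L → Prop) (S : Set (Arg L)) : Prop :=
  Admissible 𝒜 cf df S ∧ ∀ A ∈ 𝒜, Acceptable 𝒜 df S A → A ∈ S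

/-- Preferred extensions: ⊆-maximal complete extensions. -/
def Preferred (𝒜 : Set (Arg L)) (cf : Set (Arg L) → Prop)
    (df : Arg L → Arg L → Prop) (S : Set (Arg L)) : Prop :=
  Complete 𝒜 cf df S ∧ ∀ S', Complete 𝒜 cf df S' → S ⊆ S' → S' = S

/-- The grounded extension: the ⊆-minimal complete extension. -/
def Grounded (𝒜 : Set (Arg L)) (cf : Set (Arg L) → Prop)
    (df : Arg L → Arg L → Prop) (S : Set (Arg L)) : Prop :=
  Complete 𝒜 cf df S ∧ ∀ S', Complete 𝒜 cf df S' → S ⊆ S'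

/-- Stable extensions. -/
def Stable (𝒜 : Set (Arg L)) (cf : Set (Arg L) → Prop)
    (df : Arg L → Arg L → Prop) (S : Set (Arg L)) : Prop :=
  Preferred 𝒜 cf df S ∧ ∀ B ∈ 𝒜, B ∉ S → ∃ A ∈ S, df A B

/-- The set of antecedents of a rule. -/
def antsSet {L : Type} (r : InfRule L) : Set L := {φ | φ ∈ r.ants}

end ASPIC
namespace ASPIC

/-- A Tarskian abstract logic over the language `L`. -/
structure AbsLogic (L : Type) where
  Cn : Set L → Set L
  incl : ∀ X : Set L, X ⊆ Cn X
  idem : ∀ X : Set L, Cn (Cn X) = Cn X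
  compact : ∀ X : Set L, Cn X = ⋃ Y ∈ {Y : Set L | Y ⊆ X ∧ Y.Finite}, Cn Y
  absurdity : ∃ p : L, Cn {p} = Set.univ
  nontrivial : Cn ∅ ≠ Set.univ

variable {L : Type}

/-- AL-consistency of a set of formulas. -/
def AbsLogic.ALCons (AL : AbsLogic L) (X : Set L) : Prop := AL.Cn X ≠ Set.univ

/-- The abstract logic is adjunctive. -/
def Adjunctive (AL : AbsLogic L) : Prop :=
  ∀ x y : L, AL.Cn {x, y} ≠ AL.Cn {x} → AL.Cn {x, y} ≠ AL.Cn {y} →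
    ∃ z : L, z ≠ x ∧ z ≠ y ∧ AL.Cn {z} = AL.Cn {x, y}

/-- `(AS, K)` is the abstract-logic (AL) argumentation theory based on the abstract logic
`AL` and a theory with formulas `Sg`:  there are no defeasible rules, the strict rules are
exactly the `Cn`-valid inferences, the contrariness function is symmetric and matches
AL-inconsistency, the axioms are empty and the ordinary premises are `Sg`. -/
def IsALTheory (AL : AbsLogic L) (AS : ArgSystem L) (K : KB L) (Sg : Set L) : Prop :=
  AS.Rd = ∅ ∧
  (∀ r : InfRule L, r ∈ AS.Rs ↔ r.cons ∈ AL.Cn (antsSet r)) ∧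
  (∀ φ ψ : L, φ ∈ AS.contr ψ → ψ ∈ AS.contr φ) ∧
  (∀ φ ψ : L, φ ∈ AS.contr ψ → ¬ AL.ALCons {φ, ψ}) ∧
  (∀ φ ψ : L, ¬ AL.ALCons {φ, ψ} → ∃ φ' ∈ AL.Cn {φ}, φ' ∈ AS.contr ψ) ∧
  (∀ ψ : L, (AS.contr ψ).Nonempty) ∧
  K.Kn = ∅ ∧ K.Kp = Sg

/-- An argument is premise minimal: no argument with the same conclusion has a strictly
smaller set of premises. -/
def PremiseMinimal (AS : ArgSystem L) (K : KB L) (A : Arg L) : Prop :=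
  ¬ ∃ A' : Arg L, IsArg AS K A' ∧ A'.conc = A.conc ∧ A'.premises ⊂ A.premises

/-- `(X, p)` is an abstract-logic argument on the basis of the theory `Sg`. -/
def ALArgument (AL : AbsLogic L) (Sg : Set L) (X : Set L) (p : L) : Prop :=
  X ⊆ Sg ∧ AL.ALCons X ∧ p ∈ AL.Cn X ∧
  ∀ X' : Set L, X' ⊂ X → ¬ (X' ⊆ Sg ∧ AL.ALCons X' ∧ p ∈ AL.Cn X')

end ASPIC
namespace ASPIC

section Aux

variable {L : Type}

lemma Cn_mono (AL : AbsLogic L) {X X' : Set L} (h : X ⊆ X') : AL.Cn X ⊆ AL.Cn X' := by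
  intro φ hφ
  rw [AL.compact X] at hφ
  simp only [Set.mem_iUnion, Set.mem_setOf_eq] at hφ
  obtain ⟨Y, ⟨hYX, hYfin⟩, hφY⟩ := hφ
  have : φ ∈ ⋃ Y ∈ {Y : Set L | Y ⊆ X' ∧ Y.Finite}, AL.Cn Y := by
    simp only [Set.mem_iUnion, Set.mem_setOf_eq]
    exact ⟨Y, ⟨hYX.trans h, hYfin⟩, hφY⟩
  rwa [← AL.compact X'] at this

lemma mem_premisesL {φ : L} : ∀ l : List (Arg L), φ ∈ Arg.premisesL l ↔ ∃ a ∈ l, φ ∈ a.premises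
  | [] => by simp [Arg.premisesL]
  | a :: as => by
      simp [Arg.premisesL, mem_premisesL as, Set.mem_union]

lemma sder_iff (AL : AbsLogic L) (AS : ArgSystem L)
    (h2 : ∀ r : InfRule L, r ∈ AS.Rs ↔ r.cons ∈ AL.Cn (antsSet r))
    (S : Set L) (φ : L) : SDer AS S φ ↔ φ ∈ AL.Cn S := by
  constructor
  · intro h
    induction h with
    | prem h => exact AL.incl S h
    | rule hr hants ih =>
      rename_i r
      have h1 : antsSet r ⊆ AL.Cn S := fun ψ hψ => ih ψ hψ
      have hc := (h2 _).1 hr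
      have := Cn_mono AL h1 hc
      rwa [AL.idem] at this
  · intro h
    rw [AL.compact S] at h
    simp only [Set.mem_iUnion, Set.mem_setOf_eq] at h
    obtain ⟨Y, ⟨hYS, hYfin⟩, hφY⟩ := h
    set lY := hYfin.toFinset.toList with hl
    have hmem : ∀ ψ, ψ ∈ lY ↔ ψ ∈ Y := by intro ψ; simp [hl]
    have hset : antsSet ⟨lY, φ⟩ = Y := by
      ext ψ; simp only [antsSet, Set.mem_setOf_eq]; exact hmem ψ
    refine SDer.rule ((h2 ⟨lY, φ⟩).2 ?_) ?_
    · show φ ∈ AL.Cn (antsSet ⟨lY, φ⟩)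
      rw [hset]; exact hφY
    · intro ψ hψ
      exact SDer.prem (hYS ((hmem ψ).1 hψ))

lemma isArg_facts (AL : AbsLogic L) (AS : ArgSystem L) (K : KB L) (Sg : Set L)
    (hRs : ∀ r : InfRule L, r ∈ AS.Rs ↔ r.cons ∈ AL.Cn (antsSet r)) (hRd : AS.Rd = ∅)
    (hKn : K.Kn = ∅) (hKp : K.Kp = Sg) :
    ∀ A : Arg L, IsArg AS K A → A.premises ⊆ Sg ∧ A.conc ∈ AL.Cn A.premises := by
  intro A hA
  induction hA with
  | prem h =>
    rename_i φ
    constructor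
    · intro ψ hψ
      simp only [Arg.premises, Set.mem_singleton_iff] at hψ; subst hψ
      rcases h with h | h
      · rw [hKn] at h; exact absurd h (Set.notMem_empty _)
      · rwa [hKp] at h
    · exact AL.incl _ (by simp [Arg.premises, Arg.conc])
  | app hl hr hmap ih =>
    rename_i l r
    have hsub : ∀ a ∈ l, a.premises ⊆ Arg.premisesL l := by
      intro a ha ψ hψ; exact (mem_premisesL l).2 ⟨a, ha, hψ⟩
    constructor
    · intro ψ hψ
      simp only [Arg.premises] at hψ
      obtain ⟨a, ha, hψ⟩ := (mem_premisesL l).1 hψ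
      exact (ih a ha).1 hψ
    · show r.cons ∈ AL.Cn (Arg.premisesL l)
      have hr' : r ∈ AS.Rs := by
        rcases hr with h | h
        · exact h
        · rw [hRd] at h; exact absurd h (Set.notMem_empty _)
      have hcons := (hRs r).1 hr'
      have hants : antsSet r ⊆ AL.Cn (Arg.premisesL l) := by
        intro ψ hψ
        have hψ' : ψ ∈ r.ants := hψ
        rw [← hmap] at hψ'
        obtain ⟨a, ha, rfl⟩ := List.mem_map.1 hψ'
        exact Cn_mono AL (hsub a ha) (ih a ha).2
      have := Cn_mono AL hants hcons
      rwa [AL.idem] at this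

lemma ccons_iff (AL : AbsLogic L) (AS : ArgSystem L)
    (hRs : ∀ r : InfRule L, r ∈ AS.Rs ↔ r.cons ∈ AL.Cn (antsSet r))
    (hinc : ∀ φ ψ : L, φ ∈ AS.contr ψ → ¬ AL.ALCons {φ, ψ})
    (S : Set L) : CCons AS S ↔ AL.ALCons S := by
  constructor
  · intro h
    by_contra habs
    simp only [AbsLogic.ALCons, not_ne_iff] at habs
    obtain ⟨p, hp⟩ := AL.absurdity
    obtain ⟨ψ, hψ1, hψ2⟩ := AS.hcontrad p
    exact h p ψ ⟨hψ2, hψ1⟩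
      ⟨(sder_iff AL AS hRs S p).2 (by rw [habs]; trivial),
       (sder_iff AL AS hRs S ψ).2 (by rw [habs]; trivial)⟩
  · rintro h φ ψ hc ⟨h1, h2⟩
    have hφ := (sder_iff AL AS hRs S φ).1 h1
    have hψ := (sder_iff AL AS hRs S ψ).1 h2
    have hin : ¬ AL.ALCons {φ, ψ} := hinc φ ψ hc.1
    simp only [AbsLogic.ALCons, not_ne_iff] at hin
    have hsub : ({φ, ψ} : Set L) ⊆ AL.Cn S := by
      intro x hx
      rcases hx with rfl | hx
      · exact hφ
      · simp only [Set.mem_singleton_iff] at hx; subst hx; exact hψ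
    have hcn : AL.Cn {φ, ψ} ⊆ AL.Cn S := by
      have := Cn_mono AL hsub; rwa [AL.idem] at this
    exact h (Set.eq_univ_of_univ_subset (hin ▸ hcn))

end Aux

/-- Proposition 19: for the abstract-logic argumentation theory `(AS, K)`
based on an adjunctive abstract logic and a theory `Sg`, an argument `A` on the basis of
`(AS, K)` is c-consistent and premise minimal iff `(Prem(A), Conc(A))` is an AL-argument
on the basis of the theory. -/
theorem statement16 {L : Type} (AL : AbsLogic L) (hAdj : Adjunctive AL)
    (AS : ArgSystem L) (K : KB L) (Sg : Set L)
    (hALT : IsALTheory AL AS K Sg)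
    (A : Arg L) (hA : IsArg AS K A) :
    (CCons AS A.premises ∧ PremiseMinimal AS K A) ↔
      ALArgument AL Sg A.premises A.conc := by
  obtain ⟨hRd, hRs, hsym, hinc, hex, hne, hKn, hKp⟩ := hALT
  obtain ⟨hprem, hconc⟩ := isArg_facts AL AS K Sg hRs hRd hKn hKp A hA
  constructor
  · rintro ⟨hcc, hmin⟩
    refine ⟨hprem, (ccons_iff AL AS hRs hinc _).1 hcc, hconc, ?_⟩
    rintro X' hX' ⟨hX'Sg, _, hX'cn⟩
    rw [AL.compact X'] at hX'cn
    simp only [Set.mem_iUnion, Set.mem_setOf_eq] at hX'cn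
    obtain ⟨Y, ⟨hYX', hYfin⟩, hY⟩ := hX'cn
    set lY := hYfin.toFinset.toList with hl
    have hmemlY : ∀ ψ, ψ ∈ lY ↔ ψ ∈ Y := by intro ψ; simp [hl]
    set A' : Arg L := Arg.app (lY.map Arg.prem) ⟨lY, A.conc⟩ with hA'
    have hpremA' : A'.premises = Y := by
      ext ψ
      simp only [hA', Arg.premises, mem_premisesL]
      constructor
      · rintro ⟨a, ha, hψ⟩
        obtain ⟨x, hx, rfl⟩ := List.mem_map.1 ha
        simp only [Arg.premises, Set.mem_singleton_iff] at hψ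
        subst hψ; exact (hmemlY _).1 hx
      · intro hψ
        exact ⟨Arg.prem ψ, List.mem_map.2 ⟨ψ, (hmemlY ψ).2 hψ, rfl⟩, by
          simp [Arg.premises]⟩
    apply hmin
    refine ⟨A', ?_, rfl, ?_⟩
    · apply IsArg.app
      · rintro a ha
        obtain ⟨x, hx, rfl⟩ := List.mem_map.1 ha
        exact IsArg.prem (Or.inr (by rw [hKp]; exact hX'Sg (hYX' ((hmemlY x).1 hx))))
      · left
        rw [hRs]
        show A.conc ∈ AL.Cn (antsSet ⟨lY, A.conc⟩)
        have hset : antsSet ⟨lY, A.conc⟩ = Y := by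
          ext ψ; simp only [antsSet, Set.mem_setOf_eq]; exact hmemlY ψ
        rw [hset]; exact hY
      · show (lY.map Arg.prem).map Arg.conc = lY
        simp [List.map_map, Function.comp_def, Arg.conc]
    · rw [hpremA']
      exact ssubset_of_subset_of_ssubset hYX' hX'
  · rintro ⟨_, hcons, _, hmin⟩
    refine ⟨(ccons_iff AL AS hRs hinc _).2 hcons, ?_⟩
    rintro ⟨A', hA2, hconc', hsub⟩
    obtain ⟨hprem', hcn'⟩ := isArg_facts AL AS K Sg hRs hRd hKn hKp A' hA2
    have hmono := Cn_mono AL hsub.subset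
    refine hmin A'.premises hsub ⟨hprem', ?_, hconc' ▸ hcn'⟩
    intro he
    exact hcons (Set.eq_univ_of_univ_subset (he ▸ hmono))

end ASPIC
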